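/- arXiv:2001.06636 — 3 statements merged into one kernel-verified Lean document; each statement's English description precedes it below -/
import Mathlib

section
/- Let Σ = (X, Y, M(U), φ, h) be a linear control system with U ≠ {0} that is exponentially stable, robust with respect to the input, and strictly causal, and let V(T) := sup{ ‖h(φ(T,0,u))‖_Y : u ∈ M(U), sup_{0≤t≤T}‖u(t)‖_U = 1 } for T > 0. Then for every ε > 0 there exists a periodic input u_ε ∈ M(U) with sup_{s≥0}‖u_ε(s)‖_U = 1 such that limsup_{t→∞} ‖h(φ(t,0,u_ε))‖_Y ≥ sup_{T>0} V(T) − ε. -/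
open Filter

noncomputable section

/-- A linear control system `Σ = (X, Y, M(U), φ, h)` in the sense of
Karafyllis, "On the Relation of IOS-Gains and Asymptotic Gains For Linear Systems".
Inputs are functions `u : ℝ → U`; only values on `[0, ∞)` are relevant. -/
structure LinearControlSystem (X Y U : Type*)
    [NormedAddCommGroup X] [NormedSpace ℝ X]
    [NormedAddCommGroup Y] [NormedSpace ℝ Y]
    [NormedAddCommGroup U] [NormedSpace ℝ U] where
  /-- the set `M(U)` of admissible inputs -/
  inputs : Set (ℝ → U)
  /-- the transition map `φ` -/
  trans : ℝ → X → (ℝ → U) → X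
  /-- the continuous linear output map `h : X → Y` -/
  out : X →L[ℝ] Y
  /-- `U ≠ {0}` -/
  U_nontrivial : ∃ v : U, v ≠ 0
  /-- inputs are locally bounded -/
  loc_bdd : ∀ u ∈ inputs, ∀ T : ℝ, BddAbove ((fun s => ‖u s‖) '' Set.Icc 0 T)
  zero_mem : (0 : ℝ → U) ∈ inputs
  add_mem : ∀ u₁ ∈ inputs, ∀ u₂ ∈ inputs, u₁ + u₂ ∈ inputs
  smul_mem : ∀ u ∈ inputs, ∀ c : ℝ, c • u ∈ inputs
  concat_le_mem : ∀ u₁ ∈ inputs, ∀ u₂ ∈ inputs, ∀ τ > (0 : ℝ),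
    (fun t => if t ≤ τ then u₁ t else u₂ (t - τ)) ∈ inputs
  concat_lt_mem : ∀ u₁ ∈ inputs, ∀ u₂ ∈ inputs, ∀ τ > (0 : ℝ),
    (fun t => if t < τ then u₁ t else u₂ (t - τ)) ∈ inputs
  /-- closure under the shift operator `δ_τ` -/
  shift_mem : ∀ u ∈ inputs, ∀ τ > (0 : ℝ), (fun t => u (t + τ)) ∈ inputs
  exists_input_val : ∀ v : U, ∃ u ∈ inputs, u 0 = v
  /-- closure under `T`-periodic extension -/
  periodic_ext_mem : ∀ u ∈ inputs, ∀ T > (0 : ℝ),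
    (fun t => u (t - T * ⌊t / T⌋)) ∈ inputs
  identity : ∀ x : X, ∀ u ∈ inputs, trans 0 x u = x
  causality : ∀ t ≥ (0 : ℝ), ∀ x : X, ∀ u ∈ inputs, ∀ v ∈ inputs,
    (∀ s, 0 ≤ s → s ≤ t → u s = v s) → trans t x u = trans t x v
  semigroup : ∀ x : X, ∀ u ∈ inputs, ∀ τ t : ℝ, 0 ≤ τ → τ ≤ t →
    trans t x u = trans (t - τ) (trans τ x u) (fun s => u (s + τ))
  linearity : ∀ t ≥ (0 : ℝ), ∀ x₁ x₂ : X, ∀ u₁ ∈ inputs, ∀ u₂ ∈ inputs, ∀ a b : ℝ,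
    trans t (a • x₁ + b • x₂) (a • u₁ + b • u₂) = a • trans t x₁ u₁ + b • trans t x₂ u₂

namespace LinearControlSystem

variable {X Y U : Type*}
    [NormedAddCommGroup X] [NormedSpace ℝ X]
    [NormedAddCommGroup Y] [NormedSpace ℝ Y]
    [NormedAddCommGroup U] [NormedSpace ℝ U]

/-- `sup_{0 ≤ s ≤ t} ‖u(s)‖`. -/
def runSup (u : ℝ → U) (t : ℝ) : ℝ :=
  sSup ((fun s => ‖u s‖) '' Set.Icc 0 t)

/-- `sup_{s ≥ 0} ‖u(s)‖`. -/
def supNorm (u : ℝ → U) : ℝ :=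
  sSup ((fun s => ‖u s‖) '' Set.Ici 0)

/-- exponential stability with the specific constants `M, σ > 0` -/
def IsES (sys : LinearControlSystem X Y U) (M σ : ℝ) : Prop :=
  0 < M ∧ 0 < σ ∧ ∀ x : X, ∀ t ≥ (0 : ℝ),
    ‖sys.trans t x 0‖ ≤ M * Real.exp (-σ * t) * ‖x‖

/-- exponential stability (ES) -/
def ES (sys : LinearControlSystem X Y U) : Prop :=
  ∃ M σ : ℝ, sys.IsES M σ

/-- robustness with respect to the input, with the specific nondecreasing function `b` -/
def IsRobust (sys : LinearControlSystem X Y U) (b : ℝ → ℝ) : Prop :=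
  MonotoneOn b (Set.Ici 0) ∧ (∀ t, 0 ≤ b t) ∧
    ∀ u ∈ sys.inputs, ∀ t ≥ (0 : ℝ), ‖sys.trans t 0 u‖ ≤ b t * runSup u t

/-- robustness with respect to the input -/
def Robust (sys : LinearControlSystem X Y U) : Prop :=
  ∃ b : ℝ → ℝ, sys.IsRobust b

/-- strict causality -/
def StrictlyCausal (sys : LinearControlSystem X Y U) : Prop :=
  ∀ t > (0 : ℝ), ∀ u ∈ sys.inputs, ∀ v ∈ sys.inputs,
    (∀ s, 0 ≤ s → s < t → u s = v s) → sys.trans t 0 u = sys.trans t 0 v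

/-- the minimum IOS-gain `γ` -/
def gain (sys : LinearControlSystem X Y U) : ℝ :=
  sSup {r | ∃ t ≥ (0 : ℝ), ∃ u ∈ sys.inputs, runSup u t = 1 ∧ r = ‖sys.out (sys.trans t 0 u)‖}

/-- the minimum output asymptotic gain `γ_as` -/
def asympGain (sys : LinearControlSystem X Y U) : ℝ :=
  sSup {r | ∃ u ∈ sys.inputs, supNorm u = 1 ∧
    r = limsup (fun t => ‖sys.out (sys.trans t 0 u)‖) atTop}

/-- the value `V(T)` of the optimal control problem (4.5) -/
def V (sys : LinearControlSystem X Y U) (T : ℝ) : ℝ :=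
  sSup {r | ∃ u ∈ sys.inputs, runSup u T = 1 ∧ r = ‖sys.out (sys.trans T 0 u)‖}

/-- periodic inputs -/
def Periodic (u : ℝ → U) : Prop :=
  ∃ T > (0 : ℝ), ∀ t ≥ (0 : ℝ), u (t + T) = u t

end LinearControlSystem

/-! Choose `T` and `u` with `‖h(φ(T, 0, u))‖` within `ε` of `sup_T V(T)`. By strict causality
only `u` on `[0, T)` matters, so it may be normalised there to `sup_{[0,T)} ‖u‖ = 1`. Repeat it
with period `P = T + τ`, resting with zero input during `[T, P)`. Exponential stability makes the
state at the start of each period uniformly `O(e^{-στ})` (a contraction plus a constant forcing),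
so at the times `k P + T` the output is within `O(e^{-στ})` of `h(φ(T, 0, u))`. -/

lemma le_div_one_sub_of_le_mul_add {r : ℕ → ℝ} {a c : ℝ} (ha₀ : 0 ≤ a) (ha₁ : a < 1)
    (h0 : r 0 ≤ c / (1 - a)) (hstep : ∀ k, r (k + 1) ≤ a * r k + c) (k : ℕ) :
    r k ≤ c / (1 - a) := by
  induction k with
  | zero => exact h0
  | succ k ih =>
    have hfix : a * (c / (1 - a)) + c = c / (1 - a) := by
      field_simp [(sub_pos.2 ha₁).ne']
      ring
    calc r (k + 1) ≤ a * r k + c := hstep k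
      _ ≤ a * (c / (1 - a)) + c := by gcongr
      _ = c / (1 - a) := hfix

lemma tendsto_mul_exp_neg_mul_atTop {σ : ℝ} (hσ : 0 < σ) (M : ℝ) :
    Tendsto (fun t => M * Real.exp (-σ * t)) atTop (nhds 0) := by
  have hexp : Tendsto (fun t => Real.exp (-σ * t)) atTop (nhds 0) :=
    Real.tendsto_exp_atBot.comp (tendsto_id.const_mul_atTop_of_neg (neg_neg_of_pos hσ))
  simpa using hexp.const_mul M

lemma sub_mul_floor_div_eq_toIcoMod {P : ℝ} (hP : 0 < P) (t : ℝ) :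
    t - P * ⌊t / P⌋ = toIcoMod hP 0 t := by
  rw [toIcoMod, toIcoDiv_eq_floor, sub_zero, zsmul_eq_mul, mul_comm]

namespace LinearControlSystem

section

variable {U : Type*} [NormedAddCommGroup U]

/-- The analogue of `runSup` on `[0, t)`, all that `φ(t, 0, u)` sees under strict causality. -/
def runSupLT (u : ℝ → U) (t : ℝ) : ℝ :=
  sSup ((fun s => ‖u s‖) '' Set.Ico 0 t)

/-- `u` on `[0, T)`, padded with `0` up to time `P`, extended `P`-periodically. -/
def truncPeriodicExt (u : ℝ → U) (T P : ℝ) : ℝ → U :=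
  fun t => if t - P * ⌊t / P⌋ < T then u (t - P * ⌊t / P⌋) else 0

variable {u : ℝ → U} {T P : ℝ}

lemma truncPeriodicExt_add_period (hP : 0 < P) (t : ℝ) :
    truncPeriodicExt u T P (t + P) = truncPeriodicExt u T P t := by
  simp only [truncPeriodicExt, sub_mul_floor_div_eq_toIcoMod hP, toIcoMod_add_right]

lemma truncPeriodicExt_periodic (hP : 0 < P) : Periodic (truncPeriodicExt u T P) :=
  ⟨P, hP, fun t _ => truncPeriodicExt_add_period hP t⟩

lemma truncPeriodicExt_of_mem_Ico (hP : 0 < P) {t : ℝ} (ht : t ∈ Set.Ico 0 P) :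
    truncPeriodicExt u T P t = if t < T then u t else 0 := by
  have hmod : toIcoMod hP 0 t = t := (toIcoMod_eq_self hP).2 (by rwa [zero_add])
  simp only [truncPeriodicExt, sub_mul_floor_div_eq_toIcoMod hP, hmod]

lemma norm_truncPeriodicExt_le_one (hP : 0 < P) (hu1 : ∀ s ∈ Set.Ico 0 T, ‖u s‖ ≤ 1)
    (t : ℝ) : ‖truncPeriodicExt u T P t‖ ≤ 1 := by
  have hmod := toIcoMod_mem_Ico hP 0 t
  simp only [truncPeriodicExt, sub_mul_floor_div_eq_toIcoMod hP]
  split_ifs with h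
  · exact hu1 _ ⟨hmod.1, h⟩
  · simp

end

open Pointwise

variable {X Y U : Type*}
    [NormedAddCommGroup X] [NormedSpace ℝ X]
    [NormedAddCommGroup Y] [NormedSpace ℝ Y]
    [NormedAddCommGroup U] [NormedSpace ℝ U]

lemma sSup_norm_image_smul {c : ℝ} (hc : 0 ≤ c) (u : ℝ → U) (A : Set ℝ) :
    sSup ((fun s => ‖(c • u) s‖) '' A) = c * sSup ((fun s => ‖u s‖) '' A) := by
  have himage : (fun s => ‖(c • u) s‖) '' A = c • (fun s => ‖u s‖) '' A := by
    rw [← Set.image_smul, Set.image_image]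
    simp [norm_smul, abs_of_nonneg hc]
  rw [himage, Real.sSup_smul_of_nonneg hc, smul_eq_mul]

variable (sys : LinearControlSystem X Y U)

lemma bddAbove_norm_image_Ico {u : ℝ → U} (hu : u ∈ sys.inputs) (t : ℝ) :
    BddAbove ((fun s => ‖u s‖) '' Set.Ico 0 t) :=
  (sys.loc_bdd u hu t).mono (Set.image_mono Set.Ico_subset_Icc_self)

lemma norm_le_runSupLT {u : ℝ → U} (hu : u ∈ sys.inputs) {s t : ℝ} (hs : s ∈ Set.Ico 0 t) :
    ‖u s‖ ≤ runSupLT u t :=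
  le_csSup (sys.bddAbove_norm_image_Ico hu t) ⟨s, hs, rfl⟩

lemma runSupLT_le_runSup {u : ℝ → U} (hu : u ∈ sys.inputs) {t : ℝ} (ht : 0 < t) :
    runSupLT u t ≤ runSup u t :=
  csSup_le_csSup (sys.loc_bdd u hu t) ⟨_, ⟨0, ⟨le_rfl, ht⟩, rfl⟩⟩
    (Set.image_mono Set.Ico_subset_Icc_self)

lemma trans_zero_zero {t : ℝ} (ht : 0 ≤ t) : sys.trans t 0 0 = 0 := by
  simpa using sys.linearity t ht 0 0 0 sys.zero_mem 0 sys.zero_mem 0 0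

lemma trans_eq_add {t : ℝ} (ht : 0 ≤ t) (x : X) {u : ℝ → U} (hu : u ∈ sys.inputs) :
    sys.trans t x u = sys.trans t x 0 + sys.trans t 0 u := by
  simpa using sys.linearity t ht x 0 0 sys.zero_mem u hu 1 1

lemma trans_smul {t : ℝ} (ht : 0 ≤ t) {u : ℝ → U} (hu : u ∈ sys.inputs) (c : ℝ) :
    sys.trans t 0 (c • u) = c • sys.trans t 0 u := by
  simpa using sys.linearity t ht 0 0 u hu 0 sys.zero_mem c 0

lemma shift_mem_of_nonneg {u : ℝ → U} (hu : u ∈ sys.inputs) {τ : ℝ} (hτ : 0 ≤ τ) :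
    (fun s => u (s + τ)) ∈ sys.inputs := by
  rcases hτ.eq_or_lt with rfl | hτ
  · simpa using hu
  · exact sys.shift_mem u hu τ hτ

lemma trans_add {u : ℝ → U} (hu : u ∈ sys.inputs) (x : X) {τ s : ℝ} (hτ : 0 ≤ τ) (hs : 0 ≤ s) :
    sys.trans (τ + s) x u =
      sys.trans s (sys.trans τ x u) 0 + sys.trans s 0 (fun r => u (r + τ)) := by
  rw [sys.semigroup x u hu τ (τ + s) hτ (le_add_of_nonneg_right hs), add_sub_cancel_left,
    sys.trans_eq_add hs _ (sys.shift_mem_of_nonneg hu hτ)]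

variable {sys}

lemma StrictlyCausal.trans_eq_zero (hsc : sys.StrictlyCausal)
    {t : ℝ} (ht : 0 < t) {u : ℝ → U} (hu : u ∈ sys.inputs)
    (hzero : ∀ s, 0 ≤ s → s < t → u s = 0) : sys.trans t 0 u = 0 := by
  rw [hsc t ht u hu 0 sys.zero_mem hzero, sys.trans_zero_zero ht.le]

lemma IsES.mul_exp_neg_mul_anti {M σ : ℝ} (hES : sys.IsES M σ) {t s : ℝ} (hst : s ≤ t) :
    M * Real.exp (-σ * t) ≤ M * Real.exp (-σ * s) := by
  have hexp : -σ * t ≤ -σ * s := by nlinarith [hES.2.1]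
  exact mul_le_mul_of_nonneg_left (Real.exp_le_exp.2 hexp) hES.1.le

lemma IsES.norm_trans_le {M σ : ℝ} (hES : sys.IsES M σ) {t s : ℝ} (hs : 0 ≤ s) (hst : s ≤ t)
    (x : X) : ‖sys.trans t x 0‖ ≤ M * Real.exp (-σ * s) * ‖x‖ :=
  (hES.2.2 x t (hs.trans hst)).trans <|
    mul_le_mul_of_nonneg_right (hES.mul_exp_neg_mul_anti hst) (norm_nonneg x)

lemma IsES.norm_trans_le_mul {M σ : ℝ} (hES : sys.IsES M σ) {t : ℝ} (ht : 0 ≤ t) (x : X) :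
    ‖sys.trans t x 0‖ ≤ M * ‖x‖ := by
  simpa using hES.norm_trans_le le_rfl ht x

lemma IsRobust.norm_trans_le {b : ℝ → ℝ} (hb : sys.IsRobust b) {u : ℝ → U}
    (hu : u ∈ sys.inputs) (hu1 : ∀ s, ‖u s‖ ≤ 1) {t s : ℝ} (ht : 0 ≤ t) (hts : t ≤ s) :
    ‖sys.trans t 0 u‖ ≤ b s := calc
  ‖sys.trans t 0 u‖ ≤ b t * runSup u t := hb.2.2 u hu t ht
  _ ≤ b t * 1 := by
    gcongr
    · exact hb.2.1 t
    · exact Real.sSup_le (by rintro _ ⟨r, -, rfl⟩; exact hu1 r) zero_le_one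
  _ ≤ b s := by rw [mul_one]; exact hb.1 ht (ht.trans hts) hts

variable (sys)

lemma exists_sSup_norm_image_eq_one {A : Set ℝ} {T : ℝ} (h0 : 0 ∈ A) (hA : A ⊆ Set.Icc 0 T) :
    ∃ u ∈ sys.inputs, sSup ((fun s => ‖u s‖) '' A) = 1 := by
  obtain ⟨v, hv⟩ := sys.U_nontrivial
  obtain ⟨w, hw, hw0⟩ := sys.exists_input_val v
  set c := sSup ((fun s => ‖w s‖) '' A)
  have hc : 0 < c := (norm_pos_iff.2 hv).trans_le <|
    le_csSup ((sys.loc_bdd w hw T).mono (Set.image_mono hA)) ⟨0, h0, congrArg norm hw0⟩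
  exact ⟨c⁻¹ • w, sys.smul_mem w hw c⁻¹, by
    rw [sSup_norm_image_smul (inv_nonneg.2 hc.le), inv_mul_cancel₀ hc.ne']⟩

lemma exists_runSup_eq_one {T : ℝ} (hT : 0 ≤ T) : ∃ u ∈ sys.inputs, runSup u T = 1 :=
  sys.exists_sSup_norm_image_eq_one ⟨le_rfl, hT⟩ subset_rfl

lemma exists_runSupLT_eq_one {T : ℝ} (hT : 0 < T) : ∃ u ∈ sys.inputs, runSupLT u T = 1 :=
  sys.exists_sSup_norm_image_eq_one ⟨le_rfl, hT⟩ Set.Ico_subset_Icc_self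

lemma exists_lt_norm_out_trans {r : ℝ} (hr : r < sSup {r | ∃ T > (0 : ℝ), r = sys.V T}) :
    ∃ T > 0, ∃ u ∈ sys.inputs, runSup u T = 1 ∧ r < ‖sys.out (sys.trans T 0 u)‖ := by
  obtain ⟨_, ⟨T, hT, rfl⟩, hrV⟩ := exists_lt_of_lt_csSup (by exact ⟨_, 1, one_pos, rfl⟩) hr
  obtain ⟨u, hu, hu1⟩ := sys.exists_runSup_eq_one hT.le
  obtain ⟨_, ⟨u, hu, hu1, rfl⟩, hlt⟩ := exists_lt_of_lt_csSup (by exact ⟨_, u, hu, hu1, rfl⟩) hrV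
  exact ⟨T, hT, u, hu, hu1, hlt⟩

variable {sys} in
/-- Rescale `u` by `(sup_{[0,T)} ‖u‖)⁻¹ ≥ 1`; if that supremum is `0`, strict causality gives
`φ(T, 0, u) = 0`. -/
lemma StrictlyCausal.exists_runSupLT_eq_one_norm_out_le (hsc : sys.StrictlyCausal) {T : ℝ}
    (hT : 0 < T) {u : ℝ → U} (hu : u ∈ sys.inputs) (hu1 : runSup u T ≤ 1) :
    ∃ u' ∈ sys.inputs, runSupLT u' T = 1 ∧
      ‖sys.out (sys.trans T 0 u)‖ ≤ ‖sys.out (sys.trans T 0 u')‖ := by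
  set c := runSupLT u T
  have hc0 : 0 ≤ c := (norm_nonneg _).trans (sys.norm_le_runSupLT hu ⟨le_rfl, hT⟩)
  rcases hc0.eq_or_lt with hc | hc
  · have hzero : sys.trans T 0 u = 0 := hsc.trans_eq_zero hT hu fun s hs₀ hsT =>
      norm_le_zero_iff.1 (hc ▸ sys.norm_le_runSupLT hu ⟨hs₀, hsT⟩)
    obtain ⟨u', hu', hu'1⟩ := sys.exists_runSupLT_eq_one hT
    exact ⟨u', hu', hu'1, by simp [hzero]⟩
  · have hc1 : 1 ≤ c⁻¹ := (one_le_inv₀ hc).2 ((sys.runSupLT_le_runSup hu hT).trans hu1)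
    refine ⟨c⁻¹ • u, sys.smul_mem u hu c⁻¹, ?_, ?_⟩
    · exact (sSup_norm_image_smul (inv_nonneg.2 hc0) u _).trans (inv_mul_cancel₀ hc.ne')
    · rw [sys.trans_smul hT.le hu, map_smul, norm_smul, Real.norm_of_nonneg (inv_nonneg.2 hc0)]
      exact le_mul_of_one_le_left (norm_nonneg _) hc1

section truncPeriodicExt

variable {u : ℝ → U} {T P : ℝ}

lemma truncPeriodicExt_mem (hu : u ∈ sys.inputs) (hT : 0 < T) (hP : 0 < P) :
    truncPeriodicExt u T P ∈ sys.inputs :=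
  sys.periodic_ext_mem _ (sys.concat_lt_mem u hu 0 sys.zero_mem T hT) P hP

lemma norm_truncPeriodicExt_le_one_of_runSupLT (hu : u ∈ sys.inputs) (hu1 : runSupLT u T ≤ 1)
    (hP : 0 < P) (t : ℝ) : ‖truncPeriodicExt u T P t‖ ≤ 1 :=
  norm_truncPeriodicExt_le_one hP (fun _ hs => (sys.norm_le_runSupLT hu hs).trans hu1) t

lemma supNorm_truncPeriodicExt (hu : u ∈ sys.inputs) (hT : 0 < T) (hTP : T < P)
    (hu1 : runSupLT u T = 1) : supNorm (truncPeriodicExt u T P) = 1 := by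
  have hP : 0 < P := hT.trans hTP
  have hle := sys.norm_truncPeriodicExt_le_one_of_runSupLT hu hu1.le hP
  refine le_antisymm (Real.sSup_le (by rintro _ ⟨t, -, rfl⟩; exact hle t) zero_le_one) ?_
  rw [← hu1]
  refine csSup_le_csSup ⟨1, by rintro _ ⟨t, -, rfl⟩; exact hle t⟩ ⟨_, ⟨0, ⟨le_rfl, hT⟩, rfl⟩⟩ ?_
  rintro _ ⟨s, hs, rfl⟩
  refine ⟨s, hs.1, ?_⟩
  simp only [truncPeriodicExt_of_mem_Ico hP ⟨hs.1, hs.2.trans hTP⟩, if_pos hs.2]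

variable {sys}

lemma StrictlyCausal.trans_truncPeriodicExt (hsc : sys.StrictlyCausal) (hu : u ∈ sys.inputs)
    (hT : 0 < T) (hTP : T < P) :
    sys.trans T 0 (truncPeriodicExt u T P) = sys.trans T 0 u :=
  hsc T hT _ (sys.truncPeriodicExt_mem hu hT (hT.trans hTP)) u hu fun s hs₀ hsT => by
    rw [truncPeriodicExt_of_mem_Ico (hT.trans hTP) ⟨hs₀, hsT.trans hTP⟩, if_pos hsT]

lemma StrictlyCausal.trans_period_truncPeriodicExt (hsc : sys.StrictlyCausal)
    (hu : u ∈ sys.inputs) (hT : 0 < T) (hTP : T < P) :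
    sys.trans P 0 (truncPeriodicExt u T P) = sys.trans (P - T) (sys.trans T 0 u) 0 := by
  have hP : 0 < P := hT.trans hTP
  have hw := sys.truncPeriodicExt_mem hu hT hP
  have htail : sys.trans (P - T) 0 (fun r => truncPeriodicExt u T P (r + T)) = 0 :=
    hsc.trans_eq_zero (sub_pos.2 hTP) (sys.shift_mem_of_nonneg hw hT.le) fun s hs₀ hs => by
      rw [truncPeriodicExt_of_mem_Ico hP ⟨by linarith, by linarith⟩,
        if_neg (not_lt.2 (le_add_of_nonneg_left hs₀))]
  have hsplit := sys.trans_add hw 0 hT.le (sub_nonneg.2 hTP.le)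
  rwa [add_sub_cancel, htail, add_zero, hsc.trans_truncPeriodicExt hu hT hTP] at hsplit

end truncPeriodicExt

section periodic

variable {sys} {w : ℝ → U} {P : ℝ}

lemma trans_nat_mul_add (hw : w ∈ sys.inputs) (hwP : Function.Periodic w P) (hP : 0 ≤ P)
    (k : ℕ) {s : ℝ} (hs : 0 ≤ s) :
    sys.trans (k * P + s) 0 w = sys.trans s (sys.trans (k * P) 0 w) 0 + sys.trans s 0 w := by
  have hsplit := sys.trans_add hw 0 (by positivity : (0 : ℝ) ≤ k * P) hs
  rwa [show (fun r => w (r + k * P)) = w from funext (hwP.nat_mul k)] at hsplit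

variable {M σ : ℝ}

lemma IsES.norm_trans_nat_mul_le (hES : sys.IsES M σ) (hw : w ∈ sys.inputs)
    (hwP : Function.Periodic w P) (hP : 0 ≤ P) (hcontr : M * Real.exp (-σ * P) < 1) (k : ℕ) :
    ‖sys.trans (k * P) 0 w‖ ≤ ‖sys.trans P 0 w‖ / (1 - M * Real.exp (-σ * P)) := by
  refine le_div_one_sub_of_le_mul_add (r := fun k : ℕ => ‖sys.trans (k * P) 0 w‖)
    (by positivity [hES.1]) hcontr ?_ (fun k => ?_) k
  · simp only [Nat.cast_zero, zero_mul, sys.identity 0 w hw, norm_zero]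
    exact div_nonneg (norm_nonneg _) (sub_pos.2 hcontr).le
  · have hnext := trans_nat_mul_add hw hwP hP k hP
    rw [← add_one_mul, ← Nat.cast_add_one] at hnext
    simp only [hnext]
    exact (norm_add_le _ _).trans (by gcongr; exact hES.norm_trans_le hP le_rfl _)

lemma IsES.isBoundedUnder_norm_out_trans {b : ℝ → ℝ} (hES : sys.IsES M σ)
    (hb : sys.IsRobust b) (hw : w ∈ sys.inputs) (hwP : Function.Periodic w P) (hP : 0 < P)
    (hcontr : M * Real.exp (-σ * P) < 1) (hw1 : ∀ s, ‖w s‖ ≤ 1) :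
    IsBoundedUnder (· ≤ ·) atTop (fun t => ‖sys.out (sys.trans t 0 w)‖) := by
  set B := ‖sys.trans P 0 w‖ / (1 - M * Real.exp (-σ * P))
  refine isBoundedUnder_of_eventually_le (a := ‖sys.out‖ * (M * B + b P)) ?_
  filter_upwards [eventually_ge_atTop 0] with t ht
  set k := ⌊t / P⌋₊
  have hk : k * P ≤ t := (le_div_iff₀ hP).1 (Nat.floor_le (div_nonneg ht hP.le))
  have hk' : t < (k + 1) * P := (div_lt_iff₀ hP).1 (Nat.lt_floor_add_one _)
  have hs : 0 ≤ t - k * P := sub_nonneg.2 hk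
  have hstate : ‖sys.trans (t - k * P) (sys.trans (k * P) 0 w) 0‖ ≤ M * B :=
    (hES.norm_trans_le_mul hs _).trans <|
      mul_le_mul_of_nonneg_left (hES.norm_trans_nat_mul_le hw hwP hP.le hcontr k) hES.1.le
  have hinput : ‖sys.trans (t - k * P) 0 w‖ ≤ b P :=
    hb.norm_trans_le hw hw1 hs (by linarith)
  rw [← add_sub_cancel (k * P) t, trans_nat_mul_add hw hwP hP.le k hs]
  exact (sys.out.le_opNorm _).trans <| mul_le_mul_of_nonneg_left
    ((norm_add_le _ _).trans (add_le_add hstate hinput)) (norm_nonneg _)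

end periodic

variable {M σ : ℝ} {b : ℝ → ℝ} {u : ℝ → U} {T τ : ℝ}

lemma norm_out_trans_truncPeriodicExt_ge (hES : sys.IsES M σ) (hb : sys.IsRobust b)
    (hsc : sys.StrictlyCausal) (hT : 0 < T) (hτ : 0 < τ) (hu : u ∈ sys.inputs)
    (hu1 : runSupLT u T = 1) (hq : M * Real.exp (-σ * τ) ≤ 1 / 2) (k : ℕ) :
    ‖sys.out (sys.trans T 0 u)‖ - 2 * ‖sys.out‖ * M * b T * (M * Real.exp (-σ * τ)) ≤
      ‖sys.out (sys.trans (k * (T + τ) + T) 0 (truncPeriodicExt u T (T + τ)))‖ := by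
  set q := M * Real.exp (-σ * τ)
  set P := T + τ
  set w := truncPeriodicExt u T P
  have hTP : T < P := lt_add_of_pos_right T hτ
  have hP : 0 < P := hT.trans hTP
  have hw : w ∈ sys.inputs := sys.truncPeriodicExt_mem hu hT hP
  have hwP : Function.Periodic w P := truncPeriodicExt_add_period hP
  have hy : ‖sys.trans P 0 w‖ ≤ q * b T := by
    have hTu : ‖sys.trans T 0 u‖ ≤ b T := hsc.trans_truncPeriodicExt hu hT hTP ▸
      hb.norm_trans_le hw (sys.norm_truncPeriodicExt_le_one_of_runSupLT hu hu1.le hP) hT.le le_rfl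
    rw [hsc.trans_period_truncPeriodicExt hu hT hTP, add_sub_cancel_left]
    refine (hES.norm_trans_le hτ.le le_rfl _).trans ?_
    gcongr
    exact mul_nonneg hES.1.le (Real.exp_nonneg _)
  have hqP : M * Real.exp (-σ * P) ≤ q := hES.mul_exp_neg_mul_anti (by linarith)
  have hstate : ‖sys.trans (k * P) 0 w‖ ≤ 2 * (q * b T) := by
    refine (hES.norm_trans_nat_mul_le hw hwP hP.le (by linarith) k).trans ?_
    rw [div_le_iff₀ (by linarith)]
    nlinarith [norm_nonneg (sys.trans P 0 w)]
  set e := sys.out (sys.trans T (sys.trans (k * P) 0 w) 0)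
  have herr : ‖e‖ ≤ 2 * ‖sys.out‖ * M * b T * q := calc
    ‖e‖ ≤ ‖sys.out‖ * (M * ‖sys.trans (k * P) 0 w‖) :=
      (sys.out.le_opNorm _).trans (by gcongr; exact hES.norm_trans_le_mul hT.le _)
    _ ≤ ‖sys.out‖ * (M * (2 * (q * b T))) := by gcongr; exact hES.1.le
    _ = 2 * ‖sys.out‖ * M * b T * q := by ring
  have htri := norm_sub_le (e + sys.out (sys.trans T 0 u)) e
  rw [add_sub_cancel_left] at htri
  rw [trans_nat_mul_add hw hwP hP.le k hT.le, hsc.trans_truncPeriodicExt hu hT hTP, map_add]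
  linarith

/-- The periodic input repeats `u` on `[0, T)` and then rests with zero input for a time `τ`
long enough for the state to decay: the output at the times `k (T + τ) + T` then stays within
`δ` of `h(φ(T, 0, u))`. -/
theorem exists_periodic_limsup_ge (hES : sys.IsES M σ) (hb : sys.IsRobust b)
    (hsc : sys.StrictlyCausal) (hT : 0 < T) (hu : u ∈ sys.inputs) (hu1 : runSupLT u T = 1)
    {δ : ℝ} (hδ : 0 < δ) :
    ∃ w ∈ sys.inputs, Periodic w ∧ supNorm w = 1 ∧
      ‖sys.out (sys.trans T 0 u)‖ - δ ≤ limsup (fun t => ‖sys.out (sys.trans t 0 w)‖) atTop := by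
  have hq := tendsto_mul_exp_neg_mul_atTop hES.2.1 M
  have hqK : Tendsto (fun τ => 2 * ‖sys.out‖ * M * b T * (M * Real.exp (-σ * τ))) atTop
      (nhds 0) := by
    simpa using hq.const_mul (2 * ‖sys.out‖ * M * b T)
  obtain ⟨τ, ⟨hτ_half, hτ_δ⟩, hτ⟩ := ((hq.eventually (ge_mem_nhds one_half_pos)).and
    (hqK.eventually (gt_mem_nhds hδ))).and (eventually_gt_atTop 0) |>.exists
  have hP : 0 < T + τ := add_pos hT hτ
  have htimes : Tendsto (fun k : ℕ => k * (T + τ) + T) atTop atTop :=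
    tendsto_atTop_add_const_right _ _ (tendsto_natCast_atTop_atTop.atTop_mul_const hP)
  have hfreq : ∃ᶠ t in atTop, ‖sys.out (sys.trans T 0 u)‖ - δ ≤
      ‖sys.out (sys.trans t 0 (truncPeriodicExt u T (T + τ)))‖ :=
    htimes.frequently <| Frequently.of_forall fun k =>
      (by linarith : _ ≤ _ - _).trans
        (sys.norm_out_trans_truncPeriodicExt_ge hES hb hsc hT hτ hu hu1 hτ_half k)
  exact ⟨_, sys.truncPeriodicExt_mem hu hT hP, truncPeriodicExt_periodic hP,
    sys.supNorm_truncPeriodicExt hu hT (lt_add_of_pos_right T hτ) hu1,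
    le_limsup_of_frequently_le hfreq <| hES.isBoundedUnder_norm_out_trans hb
      (sys.truncPeriodicExt_mem hu hT hP) (truncPeriodicExt_add_period hP) hP
      ((hES.mul_exp_neg_mul_anti (by linarith : τ ≤ T + τ)).trans_lt (by linarith))
      (sys.norm_truncPeriodicExt_le_one_of_runSupLT hu hu1.le hP)⟩

end LinearControlSystem

open LinearControlSystem in
/-- The key step in the proof of Theorem 4.3: for every `ε > 0` there is a periodic input
`u_ε` with `sup_{s≥0}‖u_ε(s)‖ = 1` whose output limsup is at least `sup_{T>0} V(T) − ε`. -/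
theorem statement_9 {X Y U : Type*}
    [NormedAddCommGroup X] [NormedSpace ℝ X]
    [NormedAddCommGroup Y] [NormedSpace ℝ Y]
    [NormedAddCommGroup U] [NormedSpace ℝ U]
    (sys : LinearControlSystem X Y U)
    (hES : sys.ES) (hrob : sys.Robust) (hsc : sys.StrictlyCausal) :
    ∀ ε > (0 : ℝ), ∃ u ∈ sys.inputs, Periodic u ∧ supNorm u = 1 ∧
      limsup (fun t => ‖sys.out (sys.trans t 0 u)‖) atTop ≥
        sSup {r | ∃ T > (0 : ℝ), r = sys.V T} - ε := by
  intro ε hε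
  obtain ⟨M, σ, hES⟩ := hES
  obtain ⟨b, hb⟩ := hrob
  obtain ⟨T, hT, u, hu, hu1, hlt⟩ := sys.exists_lt_norm_out_trans (sub_lt_self _ hε)
  obtain ⟨u', hu', hu'1, hle⟩ := hsc.exists_runSupLT_eq_one_norm_out_le hT hu hu1.le
  obtain ⟨w, hw, hwP, hw1, hlimsup⟩ :=
    sys.exists_periodic_limsup_ge hES hb hsc hT hu' hu'1 (sub_pos.2 (hlt.trans_le hle))
  exact ⟨w, hw, hwP, hw1, by linarith⟩
end
end

section
/- Let A ∈ ℝ^{n×n} be Hurwitz, B ∈ ℝ^{n×1}, C ∈ ℝ^{1×n} (single-input single-output). Then the minimum IOS-gain and the minimum output asymptotic gain of the system ẋ = Ax + Bu, y = Cx are both equal to the L¹ norm of the impulse response: γ = γ_as = ∫₀^{+∞} |C e^{As} B| ds, and this integral is finite. -/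
open Filter MeasureTheory NormedSpace

noncomputable section

/-- Euclidean norm of a vector in `ℝ^k`. -/
def eNorm {k : ℕ} (v : Fin k → ℝ) : ℝ := Real.sqrt (∑ i, v i ^ 2)

/-- Matrix norm induced by the Euclidean norms. -/
def matNorm {k l : ℕ} (M : Matrix (Fin k) (Fin l) ℝ) : ℝ :=
  sSup {r | ∃ x : Fin l → ℝ, eNorm x = 1 ∧ r = eNorm (M.mulVec x)}

/-- `A` is Hurwitz: every (complex) eigenvalue of `A` has negative real part. -/
def Hurwitz {n : ℕ} (A : Matrix (Fin n) (Fin n) ℝ) : Prop :=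
  ∀ μ ∈ spectrum ℂ (A.map (Complex.ofReal)), μ.re < 0

/-- The matrix exponential `e^{tA}`. -/
def mexp {n : ℕ} (A : Matrix (Fin n) (Fin n) ℝ) (t : ℝ) : Matrix (Fin n) (Fin n) ℝ :=
  exp (t • A)

/-!
Write `h(s) = C e^{sA} B`. For every input with `|u| ≤ 1` and every `t ≥ 0`,
`|y(t)| = |∫₀ᵗ h(t - s) u(s) ds| ≤ ∫₀^∞ |h|`, which bounds both gains. The bound is attained
in the limit: `u(s) = sign h(T - s)` gives `y(T) = ∫₀ᵀ |h|`, and the `T`-periodic extension of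
this input gives `y((k + 1) T) ≥ ∫₀ᵀ |h| - ∫_T^∞ |h|` for every `k`, so its `limsup` tends to
`∫₀^∞ |h|` as `T → ∞`.

Finiteness of `∫₀^∞ |h|`: on the generalised eigenspace of `A` (over `ℂ`) for `μ`, `e^{sA} v` is
`e^{sμ}` times a polynomial in `s`, and `Re μ < 0` because `A` is Hurwitz.
-/

open Set
open scoped Matrix Nat Topology

-- Matrices carry no canonical norm, so the `ℓ∞`-operator norm is installed inside proofs; it must
-- be `letI` (not `let`) for the resulting instances to unify with the default matrix topology.
set_option linter.style.haveILetI false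

section MatrixExp

variable {ι : Type*} [Fintype ι] [DecidableEq ι]

theorem Matrix.exp_smul_mulVec_eq_sum_of_pow_mulVec_eq_zero
    {N : Matrix ι ι ℂ} {v : ι → ℂ} {k : ℕ} (hk : N ^ k *ᵥ v = 0) (c : ℂ) :
    exp (c • N) *ᵥ v = ∑ j ∈ Finset.range k, (c ^ j / j !) • (N ^ j *ᵥ v) := by
  letI : NormedRing (Matrix ι ι ℂ) := Matrix.linftyOpNormedRing
  letI : NormedAlgebra ℂ (Matrix ι ι ℂ) := Matrix.linftyOpNormedAlgebra
  have hsum := (exp_series_hasSum_exp' (𝕂 := ℂ) (c • N)).mapL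
    ((LinearMap.applyₗ v).comp
      (Matrix.toLin' (R := ℂ) (m := ι) (n := ι)).toLinearMap).toContinuousLinearMap
  simp only [LinearMap.coe_toContinuousLinearMap', LinearMap.coe_comp, Function.comp_apply,
    LinearEquiv.coe_coe, Matrix.toLin'_apply, LinearMap.applyₗ_apply_apply] at hsum
  refine hsum.tsum_eq.symm.trans ?_
  rw [tsum_eq_sum fun j hj => ?_]
  · refine Finset.sum_congr rfl fun j _ => ?_
    rw [smul_pow, smul_smul, Matrix.smul_mulVec, div_eq_inv_mul]
  · have hj : N ^ j = N ^ (j - k) * N ^ k := by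
      rw [← pow_add, Nat.sub_add_cancel (not_lt.mp (Finset.mem_range.not.mp hj))]
    rw [smul_pow, Matrix.smul_mulVec, Matrix.smul_mulVec, hj, ← Matrix.mulVec_mulVec, hk,
      Matrix.mulVec_zero, smul_zero, smul_zero]

theorem Matrix.exp_smul_mulVec_eq_sum_of_pow_sub_mulVec_eq_zero
    {M : Matrix ι ι ℂ} {μ : ℂ} {v : ι → ℂ} {k : ℕ} (hk : (M - μ • 1) ^ k *ᵥ v = 0) (c : ℂ) :
    exp (c • M) *ᵥ v =
      ∑ j ∈ Finset.range k, (Complex.exp (c * μ) * (c ^ j / j !)) • ((M - μ • 1) ^ j *ᵥ v) := by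
  have hsplit : c • M = (c * μ) • (1 : Matrix ι ι ℂ) + c • (M - μ • 1) := by
    rw [smul_sub, smul_smul, add_sub_cancel]
  have hcomm : Commute ((c * μ) • (1 : Matrix ι ι ℂ)) (c • (M - μ • 1)) :=
    ((Commute.one_left _).smul_left _).smul_right _
  have hscalar : exp ((c * μ) • (1 : Matrix ι ι ℂ)) = Complex.exp (c * μ) • 1 := by
    rw [Matrix.smul_one_eq_diagonal, Matrix.exp_diagonal, Pi.exp_def, ← Matrix.smul_one_eq_diagonal,
      Complex.exp_eq_exp_ℂ]
  rw [hsplit, Matrix.exp_add_of_commute _ _ hcomm, hscalar, smul_one_mul, Matrix.smul_mulVec,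
    Matrix.exp_smul_mulVec_eq_sum_of_pow_mulVec_eq_zero hk, Finset.smul_sum]
  simp_rw [smul_smul]

theorem Matrix.mem_spectrum_of_pow_sub_mulVec_eq_zero {K : Type*} [Field K]
    {M : Matrix ι ι K} {μ : K} {v : ι → K} {k : ℕ} (hv : v ≠ 0)
    (hk : (M - μ • 1) ^ k *ᵥ v = 0) : μ ∈ spectrum K M := by
  by_contra hμ
  have hunit : IsUnit ((M - μ • 1) ^ k) := by
    refine IsUnit.pow k ?_
    rw [← neg_sub, IsUnit.neg_iff, ← Algebra.algebraMap_eq_smul_one]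
    exact spectrum.notMem_iff.mp hμ
  exact hv (Matrix.mulVec_injective_iff_isUnit.mpr hunit (hk.trans (Matrix.mulVec_zero _).symm))

theorem Complex.integrableOn_exp_mul_mul_pow {μ : ℂ} (hμ : μ.re < 0) (j : ℕ) :
    IntegrableOn (fun s : ℝ => Complex.exp (s * μ) * (s : ℂ) ^ j) (Ioi 0) := by
  have hreal : IntegrableOn (fun s : ℝ => s ^ (j : ℝ) * Real.exp (-(-μ.re) * s ^ (1 : ℝ)))
      (Ioi 0) :=
    integrableOn_rpow_mul_exp_neg_mul_rpow (by linarith [j.cast_nonneg (α := ℝ)]) one_pos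
      (neg_pos.mpr hμ)
  refine (integrable_norm_iff (by fun_prop : Continuous _).aestronglyMeasurable.restrict).mp
    (hreal.congr_fun (fun s (hs : 0 < s) => ?_) measurableSet_Ioi)
  dsimp only
  rw [norm_mul, Complex.norm_exp, norm_pow, Complex.norm_real, Real.norm_of_nonneg hs.le,
    Complex.re_ofReal_mul, Real.rpow_natCast, Real.rpow_one, neg_neg, mul_comm, mul_comm s]

theorem Matrix.integrableOn_exp_smul_mulVec {M : Matrix ι ι ℂ}
    (hM : ∀ μ ∈ spectrum ℂ M, μ.re < 0) (v : ι → ℂ) :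
    IntegrableOn (fun s : ℝ => exp ((s : ℂ) • M) *ᵥ v) (Ioi 0) := by
  have hv : v ∈ ⨆ μ, Module.End.maxGenEigenspace (Matrix.toLinAlgEquiv' M) μ := by
    rw [Module.End.iSup_maxGenEigenspace_eq_top]; trivial
  induction hv using Submodule.iSup_induction' with
  | mem μ w hw =>
    obtain ⟨k, hk⟩ := (Module.End.mem_maxGenEigenspace _ _ _).mp hw
    replace hk : (M - μ • 1) ^ k *ᵥ w = 0 := by
      rwa [← map_one Matrix.toLinAlgEquiv', ← map_smul, ← map_sub, ← map_pow,
        Matrix.toLinAlgEquiv'_apply] at hk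
    rcases eq_or_ne w 0 with rfl | hw0
    · simp
    have hμ := hM μ (Matrix.mem_spectrum_of_pow_sub_mulVec_eq_zero hw0 hk)
    simp_rw [Matrix.exp_smul_mulVec_eq_sum_of_pow_sub_mulVec_eq_zero hk]
    refine integrable_finsetSum (Finset.range k) fun j _ => Integrable.smul_const ?_ _
    simpa only [mul_div_assoc] using (Complex.integrableOn_exp_mul_mul_pow hμ j).div_const _
  | zero => simp
  | add w₁ w₂ _ _ h₁ h₂ =>
    simp only [Matrix.mulVec_add]
    exact h₁.add h₂

end MatrixExp

section Impulse

variable {n : ℕ}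

theorem continuous_mexp (A : Matrix (Fin n) (Fin n) ℝ) : Continuous (mexp A) := by
  letI : NormedRing (Matrix (Fin n) (Fin n) ℝ) := Matrix.linftyOpNormedRing
  letI : NormedAlgebra ℝ (Matrix (Fin n) (Fin n) ℝ) := Matrix.linftyOpNormedAlgebra
  letI : NormedAlgebra ℚ (Matrix (Fin n) (Fin n) ℝ) := Matrix.linftyOpNormedAlgebra
  exact exp_continuous.comp (continuous_id.smul continuous_const)

theorem mexp_map_ofReal (A : Matrix (Fin n) (Fin n) ℝ) (s : ℝ) :
    (mexp A s).map Complex.ofReal = exp ((s : ℂ) • A.map Complex.ofReal) := by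
  letI : NormedRing (Matrix (Fin n) (Fin n) ℝ) := Matrix.linftyOpNormedRing
  letI : NormedAlgebra ℝ (Matrix (Fin n) (Fin n) ℝ) := Matrix.linftyOpNormedAlgebra
  letI : NormedAlgebra ℚ (Matrix (Fin n) (Fin n) ℝ) := Matrix.linftyOpNormedAlgebra
  letI : NormedRing (Matrix (Fin n) (Fin n) ℂ) := Matrix.linftyOpNormedRing
  have hsmul : (s : ℂ) • A.map Complex.ofReal = Complex.ofRealHom.mapMatrix (s • A) := by
    ext i j
    simp
  rw [hsmul]
  exact map_exp (Complex.ofRealHom.mapMatrix : Matrix (Fin n) (Fin n) ℝ →+* _)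
    (by exact continuous_id.matrix_map Complex.continuous_ofReal) (s • A)

def impulse (A : Matrix (Fin n) (Fin n) ℝ) (B C : Fin n → ℝ) (s : ℝ) : ℝ :=
  C ⬝ᵥ (mexp A s *ᵥ B)

theorem continuous_impulse (A : Matrix (Fin n) (Fin n) ℝ) (B C : Fin n → ℝ) :
    Continuous (impulse A B C) :=
  continuous_const.dotProduct ((continuous_mexp A).matrix_mulVec continuous_const)

theorem integrableOn_impulse {A : Matrix (Fin n) (Fin n) ℝ} (hA : Hurwitz A) (B C : Fin n → ℝ) :
    IntegrableOn (impulse A B C) (Ioi 0) := by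
  have hvec := Matrix.integrableOn_exp_smul_mulVec hA (Complex.ofReal ∘ B)
  have hdot : IntegrableOn (fun s : ℝ =>
      (Complex.ofReal ∘ C) ⬝ᵥ (exp ((s : ℂ) • A.map Complex.ofReal) *ᵥ (Complex.ofReal ∘ B)))
      (Ioi 0) := by
    simp only [dotProduct]
    exact integrable_finsetSum _ fun i _ => (hvec.eval i).const_mul _
  refine IntegrableOn.congr_fun hdot.re (fun s _ => ?_) measurableSet_Ioi
  rw [← mexp_map_ofReal]
  simp [impulse, dotProduct, Matrix.mulVec]

end Impulse

theorem Real.measurable_sign : Measurable Real.sign :=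
  measurable_const.ite measurableSet_Iio (measurable_const.ite measurableSet_Ioi measurable_const)

theorem Real.abs_sign_le_one (x : ℝ) : |Real.sign x| ≤ 1 := by
  rcases Real.sign_apply_eq x with h | h | h <;> simp [h]

theorem Real.mul_sign_self (x : ℝ) : x * Real.sign x = |x| := by
  rcases lt_trichotomy x 0 with hx | rfl | hx
  · simp [Real.sign_of_neg hx, abs_of_neg hx]
  · simp
  · simp [Real.sign_of_pos hx, abs_of_pos hx]

theorem csSup_eq_of_forall_le_of_tendsto {α β : Type*} [ConditionallyCompleteLinearOrder α]
    [TopologicalSpace α] [OrderTopology α] {l : Filter β} [l.NeBot] {S : Set α} {L : α}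
    {f : β → α} (hle : ∀ r ∈ S, r ≤ L) (hf : Tendsto f l (𝓝 L))
    (hS : ∀ᶠ x in l, ∃ r ∈ S, f x ≤ r) : sSup S = L := by
  have hne : S.Nonempty := let ⟨_, r, hr, _⟩ := hS.exists; ⟨r, hr⟩
  refine le_antisymm (csSup_le hne hle) (le_of_tendsto hf (hS.mono fun x ⟨r, hr, hfr⟩ => ?_))
  exact hfr.trans (le_csSup ⟨L, hle⟩ hr)

theorem intervalIntegral_le_integral_Ioi {f : ℝ → ℝ} {a b : ℝ} (hab : a ≤ b)
    (hf : IntegrableOn f (Ioi a)) (hf0 : ∀ s, 0 ≤ f s) :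
    ∫ s in a..b, f s ≤ ∫ s in Ioi a, f s := by
  rw [intervalIntegral.integral_of_le hab]
  exact setIntegral_mono_set hf (Eventually.of_forall fun s => hf0 s)
    Ioc_subset_Ioi_self.eventuallyLE

theorem MeasureTheory.IntegrableOn.intervalIntegrable_of_le {E : Type*} [NormedAddCommGroup E]
    {f : ℝ → E} {a b c : ℝ} (hf : IntegrableOn f (Ioi c)) (ha : c ≤ a) (hb : c ≤ b) :
    IntervalIntegrable f volume a b :=
  intervalIntegrable_iff.mpr (hf.mono_set fun _ hx => (le_min ha hb).trans_lt hx.1)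

theorem IntervalIntegrable.mul_of_abs_le_one {f v : ℝ → ℝ} {a b : ℝ}
    (hf : IntervalIntegrable f volume a b) (hv : Measurable v) (hv1 : ∀ r, |v r| ≤ 1) :
    IntervalIntegrable (fun r => f r * v r) volume a b :=
  ⟨hf.1.mul_bdd hv.aestronglyMeasurable (ae_of_all _ hv1),
    hf.2.mul_bdd hv.aestronglyMeasurable (ae_of_all _ hv1)⟩

theorem abs_intervalIntegral_mul_le {f v : ℝ → ℝ} {a b : ℝ} (hab : a ≤ b)
    (hf : IntervalIntegrable f volume a b) (hv : ∀ᵐ r, r ∈ Ioc a b → |v r| ≤ 1) :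
    |∫ r in a..b, f r * v r| ≤ ∫ r in a..b, |f r| := by
  rw [← Real.norm_eq_abs]
  refine intervalIntegral.norm_integral_le_of_norm_le hab (hv.mono fun r hr hmem => ?_) hf.abs
  rw [Real.norm_eq_abs, abs_mul]
  exact mul_le_of_le_one_right (abs_nonneg _) (hr hmem)

section Gains

variable {h : ℝ → ℝ}

def response (h u : ℝ → ℝ) (t : ℝ) : ℝ :=
  ∫ s in (0 : ℝ)..t, h (t - s) * u s

def iosGain (h : ℝ → ℝ) : ℝ :=
  sSup {r | ∃ t ≥ (0 : ℝ), ∃ u : ℝ → ℝ, Measurable u ∧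
    (∀ᵐ s ∂(volume.restrict (Ici (0 : ℝ))), |u s| ≤ 1) ∧ r = |response h u t|}

def asymptoticGain (h : ℝ → ℝ) : ℝ :=
  sSup {r | ∃ u : ℝ → ℝ, Measurable u ∧
    (∀ᵐ s ∂(volume.restrict (Ici (0 : ℝ))), |u s| ≤ 1) ∧
    r = limsup (fun t => |response h u t|) atTop}

theorem abs_response_le (hint : IntegrableOn h (Ioi 0)) {u : ℝ → ℝ}
    (hu : ∀ᵐ s ∂(volume.restrict (Ici (0 : ℝ))), |u s| ≤ 1) {t : ℝ} (ht : 0 ≤ t) :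
    |response h u t| ≤ ∫ s in Ioi 0, |h s| := by
  rw [ae_restrict_iff' measurableSet_Ici] at hu
  calc |response h u t| ≤ ∫ s in (0 : ℝ)..t, |h (t - s)| := by
        refine abs_intervalIntegral_mul_le ht ?_ (hu.mono fun s hs hst => hs hst.1.le)
        simpa using ((hint.intervalIntegrable_of_le le_rfl ht).comp_sub_left t).symm
    _ = ∫ s in (0 : ℝ)..t, |h s| := by
        simp [intervalIntegral.integral_comp_sub_left fun s => |h s|]
    _ ≤ ∫ s in Ioi 0, |h s| :=
        intervalIntegral_le_integral_Ioi ht hint.abs fun s => abs_nonneg _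

theorem response_sign_eq (T : ℝ) :
    response h (fun s => Real.sign (h (T - s))) T = ∫ s in (0 : ℝ)..T, |h s| := by
  simp [response, Real.mul_sign_self, intervalIntegral.integral_comp_sub_left fun s => |h s|]

theorem iosGain_eq (hh : Measurable h) (hint : IntegrableOn h (Ioi 0)) :
    iosGain h = ∫ s in Ioi 0, |h s| := by
  refine csSup_eq_of_forall_le_of_tendsto ?_
    (intervalIntegral_tendsto_integral_Ioi 0 hint.abs tendsto_id)
    ((eventually_ge_atTop 0).mono fun T hT => ?_)
  · rintro r ⟨t, ht, u, -, hu, rfl⟩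
    exact abs_response_le hint hu ht
  · refine ⟨_, ⟨T, hT, fun s => Real.sign (h (T - s)),
      Real.measurable_sign.comp (hh.comp (measurable_const.sub measurable_id)),
      Eventually.of_forall fun s => Real.abs_sign_le_one _, rfl⟩, ?_⟩
    rw [response_sign_eq]
    exact le_abs_self _

/-- The `T`-periodic extension of `s ↦ sign (h (T - s))` from `[0, T)`. -/
def periodicSignInput (h : ℝ → ℝ) (T s : ℝ) : ℝ :=
  Real.sign (h (T * (⌊s / T⌋ + 1) - s))

theorem measurable_periodicSignInput (hh : Measurable h) (T : ℝ) :
    Measurable (periodicSignInput h T) :=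
  Real.measurable_sign.comp <| hh.comp <| by fun_prop

theorem periodicSignInput_sub {T : ℝ} (hT : 0 < T) (k : ℕ) {r : ℝ} (hr : r ∈ Ioc 0 T) :
    periodicSignInput h T ((k + 1) * T - r) = Real.sign (h r) := by
  have hfloor : ⌊((k + 1) * T - r) / T⌋ = k := by
    rw [Int.floor_eq_iff, le_div_iff₀ hT, div_lt_iff₀ hT]
    push_cast
    constructor <;> nlinarith [hr.1, hr.2]
  rw [periodicSignInput, hfloor]
  push_cast
  ring_nf

theorem response_eq_integral_mul_comp_sub (u : ℝ → ℝ) (t : ℝ) :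
    response h u t = ∫ r in (0 : ℝ)..t, h r * u (t - r) := by
  simpa [response] using
    intervalIntegral.integral_comp_sub_left (a := 0) (b := t) (fun r => h r * u (t - r)) t

theorem sub_integral_le_response_periodicSignInput (hh : Measurable h)
    (hint : IntegrableOn h (Ioi 0)) {T : ℝ} (hT : 0 < T) (k : ℕ) :
    2 * (∫ r in (0 : ℝ)..T, |h r|) - ∫ r in Ioi 0, |h r|
      ≤ response h (periodicSignInput h T) ((k + 1) * T) := by
  have hTt : T ≤ (k + 1) * T := le_mul_of_one_le_left hT.le (by linarith [k.cast_nonneg (α := ℝ)])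
  have ht : 0 ≤ (k + 1) * T := hT.le.trans hTt
  have hprod : ∀ {a b : ℝ}, 0 ≤ a → 0 ≤ b → IntervalIntegrable
      (fun r => h r * periodicSignInput h T ((k + 1) * T - r)) volume a b := fun ha hb =>
    (hint.intervalIntegrable_of_le ha hb).mul_of_abs_le_one
      ((measurable_periodicSignInput hh T).comp (measurable_const.sub measurable_id))
      fun _ => Real.abs_sign_le_one _
  have hfirst : ∫ r in (0 : ℝ)..T, h r * periodicSignInput h T ((k + 1) * T - r) =
      ∫ r in (0 : ℝ)..T, |h r| := by
    refine intervalIntegral.integral_congr_ae (Eventually.of_forall fun r hr => ?_)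
    rw [uIoc_of_le hT.le] at hr
    rw [periodicSignInput_sub hT k hr, Real.mul_sign_self]
  have hrest : |∫ r in T..(k + 1) * T, h r * periodicSignInput h T ((k + 1) * T - r)| ≤
      (∫ r in Ioi 0, |h r|) - ∫ r in (0 : ℝ)..T, |h r| := by
    refine (abs_intervalIntegral_mul_le hTt (hint.intervalIntegrable_of_le hT.le ht)
      (ae_of_all _ fun r _ => Real.abs_sign_le_one _)).trans ?_
    rw [le_sub_iff_add_le', intervalIntegral.integral_add_adjacent_intervals
      (hint.intervalIntegrable_of_le le_rfl hT.le).abs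
      (hint.intervalIntegrable_of_le hT.le ht).abs]
    exact intervalIntegral_le_integral_Ioi ht hint.abs fun r => abs_nonneg _
  rw [response_eq_integral_mul_comp_sub, ← intervalIntegral.integral_add_adjacent_intervals
    (hprod le_rfl hT.le) (hprod hT.le ht), hfirst]
  linarith [neg_abs_le (∫ r in T..(k + 1) * T, h r * periodicSignInput h T ((k + 1) * T - r))]

theorem asymptoticGain_eq (hh : Measurable h) (hint : IntegrableOn h (Ioi 0)) :
    asymptoticGain h = ∫ s in Ioi 0, |h s| := by
  have hbound : ∀ {u : ℝ → ℝ}, (∀ᵐ s ∂(volume.restrict (Ici (0 : ℝ))), |u s| ≤ 1) →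
      ∀ᶠ t in atTop, |response h u t| ≤ ∫ s in Ioi 0, |h s| := fun hu =>
    (eventually_ge_atTop 0).mono fun _ ht => abs_response_le hint hu ht
  have hlim : Tendsto (fun T => 2 * (∫ r in (0 : ℝ)..T, |h r|) - ∫ r in Ioi 0, |h r|) atTop
      (𝓝 (∫ r in Ioi 0, |h r|)) := by
    simpa only [two_mul, add_sub_cancel_right, id] using
      ((intervalIntegral_tendsto_integral_Ioi 0 hint.abs tendsto_id).const_mul 2).sub_const
        (∫ r in Ioi 0, |h r|)
  refine csSup_eq_of_forall_le_of_tendsto ?_ hlim ((eventually_gt_atTop 0).mono fun T hT => ?_)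
  · rintro r ⟨u, -, hu, rfl⟩
    exact limsup_le_of_le (isCoboundedUnder_le_of_le atTop fun _ => abs_nonneg _) (hbound hu)
  · have hu : ∀ᵐ s ∂(volume.restrict (Ici (0 : ℝ))), |periodicSignInput h T s| ≤ 1 :=
      ae_of_all _ fun _ => Real.abs_sign_le_one _
    refine ⟨_, ⟨_, measurable_periodicSignInput hh T, hu, rfl⟩, le_limsup_of_frequently_le ?_
      (isBoundedUnder_of_eventually_le (hbound hu))⟩
    have hperiods : Tendsto (fun k : ℕ => (k + 1) * T) atTop atTop :=
      (tendsto_natCast_atTop_atTop.atTop_add tendsto_const_nhds).atTop_mul_const hT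
    exact hperiods.frequently (Frequently.of_forall fun k =>
      (sub_integral_le_response_periodicSignInput hh hint hT k).trans (le_abs_self _))

end Gains

/-- Section 5.1, formula (5.7): for a SISO system with Hurwitz `A`, the minimum IOS-gain
and the minimum output asymptotic gain both equal the `L¹` norm of the impulse response
`∫₀^∞ |C e^{As} B| ds`, and this integral is finite. -/
theorem statement_11 {n : ℕ}
    (A : Matrix (Fin n) (Fin n) ℝ) (B : Fin n → ℝ) (C : Fin n → ℝ)
    (hA : Hurwitz A)
    (y : (ℝ → ℝ) → ℝ → ℝ)
    (hy : y = fun u t => ∫ s in (0 : ℝ)..t,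
      dotProduct C ((mexp A (t - s)).mulVec B) * u s)
    (γ γas : ℝ)
    (hγ : γ = sSup {r | ∃ t ≥ (0 : ℝ), ∃ u : ℝ → ℝ, Measurable u ∧
      (∀ᵐ s ∂(volume.restrict (Set.Ici (0 : ℝ))), |u s| ≤ 1) ∧ r = |y u t|})
    (hγas : γas = sSup {r | ∃ u : ℝ → ℝ, Measurable u ∧
      (∀ᵐ s ∂(volume.restrict (Set.Ici (0 : ℝ))), |u s| ≤ 1) ∧
      r = limsup (fun t => |y u t|) atTop}) :
    IntegrableOn (fun s => |dotProduct C ((mexp A s).mulVec B)|) (Set.Ioi 0) ∧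
    γ = ∫ s in Set.Ioi (0 : ℝ), |dotProduct C ((mexp A s).mulVec B)| ∧
    γas = ∫ s in Set.Ioi (0 : ℝ), |dotProduct C ((mexp A s).mulVec B)| := by
  replace hy : y = response (impulse A B C) := hy
  subst hy
  have hmeas := (continuous_impulse A B C).measurable
  have hint := integrableOn_impulse hA B C
  exact ⟨hint.abs, hγ.trans (iosGain_eq hmeas hint), hγas.trans (asymptoticGain_eq hmeas hint)⟩
end
end

section
/- Let A ∈ ℝ^{n×n} and B ∈ ℝ^{n×1}, and suppose there exist constants λ_i, q_i > 0 (i = 1, …, n) and an invertible matrix P ∈ ℝ^{n×n} such that P A P^{−1} = −diag(λ₁, …, λ_n) and P Pᵀ = diag(q₁, …, q_n). Then A is Hurwitz and the minimum ISS-gain of ẋ = Ax + Bu (i.e. the minimum IOS-gain with output y = x) satisfies γ = γ_as = √( Bᵀ Pᵀ diag( 1/(q₁λ₁²), …, 1/(q_nλ_n²) ) P B ). -/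
open Filter MeasureTheory NormedSpace

noncomputable section

/-!
Conjugation by `P` diagonalises `A`, so `A` is Hurwitz and `e^{τA} = P⁻¹ diag(e^{-λᵢτ}) P`.
The state therefore decouples into modes: `P x(t)` has coordinates `(PB)ᵢ yᵢ(t)` with
`yᵢ(t) = ∫₀ᵗ u(s) e^{-λᵢ(t-s)} ds`, and since `(P⁻¹)ᵀP⁻¹ = diag(1/qᵢ)`,
`|x(t)|² = Σᵢ ((PB)ᵢ yᵢ(t))² / qᵢ`. Each mode obeys `|yᵢ(t)| ≤ (1 - e^{-λᵢt})/λᵢ < 1/λᵢ`, and the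
constant input `u ≡ 1` attains all these bounds at once, with `yᵢ(t) → 1/λᵢ`. Hence
`√(Σᵢ ((PB)ᵢ/λᵢ)² / qᵢ)` bounds `|x(t)|` for every admissible input and is the limit of `|x(t)|`
for `u ≡ 1`: it is both the supremum over `t` and the largest `limsup`.
-/

open Matrix Topology

section Diagonalizable

variable {n : ℕ} {A P : Matrix (Fin n) (Fin n) ℝ} {d : Fin n → ℝ}

lemma eq_inv_mul_diagonal_mul (hP : IsUnit P.det) (hPA : P * A * P⁻¹ = diagonal d) :
    A = P⁻¹ * diagonal d * P := by
  rw [← hPA]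
  simp only [Matrix.mul_assoc, nonsing_inv_mul P hP, Matrix.mul_one]
  rw [← Matrix.mul_assoc, nonsing_inv_mul P hP, Matrix.one_mul]

lemma mexp_eq_of_conj_diagonal (hP : IsUnit P.det) (hPA : P * A * P⁻¹ = diagonal d) (t : ℝ) :
    mexp A t = P⁻¹ * diagonal (fun i => Real.exp (d i * t)) * P := by
  have hU : IsUnit P⁻¹ := (isUnit_iff_isUnit_det _).mpr (isUnit_nonsing_inv_det P hP)
  have htA : t • A = P⁻¹ * diagonal (fun i => d i * t) * P⁻¹⁻¹ := by
    rw [eq_inv_mul_diagonal_mul hP hPA, nonsing_inv_nonsing_inv P hP, ← Matrix.smul_mul,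
      ← Matrix.mul_smul, ← diagonal_smul]
    simp_rw [Pi.smul_def, smul_eq_mul, mul_comm t]
  rw [mexp, htA, Matrix.exp_conj _ _ hU, exp_diagonal, nonsing_inv_nonsing_inv P hP]
  congr
  rw [Pi.exp_def]
  simp_rw [Real.exp_eq_exp_ℝ]

lemma hurwitz_of_conj_diagonal (hP : IsUnit P.det) (hPA : P * A * P⁻¹ = diagonal d)
    (hd : ∀ i, d i < 0) : Hurwitz A := by
  let U := Units.map (Complex.ofRealHom.mapMatrix : Matrix (Fin n) (Fin n) ℝ →+* _).toMonoidHom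
    (nonsingInvUnit P hP)
  have hconj : (U : Matrix (Fin n) (Fin n) ℂ) * A.map Complex.ofReal *
      ((U⁻¹ : (Matrix (Fin n) (Fin n) ℂ)ˣ) : Matrix (Fin n) (Fin n) ℂ)
      = diagonal fun i => (d i : ℂ) := by
    have := congrArg (Complex.ofRealHom.mapMatrix) hPA
    simp only [map_mul, RingHom.mapMatrix_apply, diagonal_map, map_zero] at this
    exact this
  intro μ hμ
  rw [← spectrum.units_conjugate (u := U), hconj, spectrum_diagonal] at hμ
  obtain ⟨i, rfl⟩ := hμ
  exact_mod_cast hd i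

end Diagonalizable

def modalResponse (u : ℝ → ℝ) (a t : ℝ) : ℝ :=
  ∫ s in (0 : ℝ)..t, u s * Real.exp (-a * (t - s))

section ModalResponse

variable {u : ℝ → ℝ} {a : ℝ}

lemma integral_exp_neg_mul_sub (ha : a ≠ 0) (t : ℝ) :
    ∫ s in (0 : ℝ)..t, Real.exp (-a * (t - s)) = (1 - Real.exp (-a * t)) / a := by
  have hderiv (s : ℝ) :
      HasDerivAt (fun s => Real.exp (-a * (t - s)) / a) (Real.exp (-a * (t - s))) s := by
    have := ((((hasDerivAt_id s).const_sub t).const_mul (-a)).exp).div_const a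
    simpa [mul_div_cancel_right₀ _ ha] using this
  rw [intervalIntegral.integral_eq_sub_of_hasDerivAt (fun s _ => hderiv s)
    ((by fun_prop : Continuous fun s => Real.exp (-a * (t - s))).intervalIntegrable _ _)]
  simp only [sub_self, mul_zero, Real.exp_zero, sub_zero]
  ring

lemma modalResponse_one (ha : a ≠ 0) (t : ℝ) :
    modalResponse (fun _ => 1) a t = (1 - Real.exp (-a * t)) / a := by
  simpa [modalResponse] using integral_exp_neg_mul_sub ha t

lemma tendsto_modalResponse_one (ha : 0 < a) :
    Tendsto (modalResponse (fun _ => 1) a) atTop (𝓝 (1 / a)) := by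
  have hexp : Tendsto (fun t => Real.exp (-a * t)) atTop (𝓝 0) :=
    Real.tendsto_exp_atBot.comp (tendsto_id.const_mul_atTop_of_neg (neg_neg_of_pos ha))
  simp_rw [funext (modalResponse_one ha.ne')]
  simpa using ((tendsto_const_nhds (x := (1 : ℝ))).sub hexp).div_const a

lemma abs_modalResponse_le {t : ℝ} (hb : ∀ᵐ s ∂volume.restrict (Set.Ioc 0 t), |u s| ≤ 1)
    (ha : 0 < a) (ht : 0 ≤ t) :
    |modalResponse u a t| ≤ 1 / a := by
  have hexp : Continuous fun s => Real.exp (-a * (t - s)) := by fun_prop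
  calc |modalResponse u a t| ≤ |∫ s in (0 : ℝ)..t, Real.exp (-a * (t - s))| := by
        refine intervalIntegral.norm_integral_le_abs_of_norm_le
          (f := fun s => u s * Real.exp (-a * (t - s))) ?_ (hexp.intervalIntegrable _ _)
        rw [Set.uIoc_of_le ht]
        filter_upwards [hb] with s hs
        rw [norm_mul, Real.norm_eq_abs, Real.norm_eq_abs, Real.abs_exp]
        exact mul_le_of_le_one_left (Real.exp_nonneg _) hs
    _ = (1 - Real.exp (-a * t)) / a := by
        rw [integral_exp_neg_mul_sub ha.ne', abs_of_nonneg]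
        have : Real.exp (-a * t) ≤ 1 := Real.exp_le_one_iff.mpr (by nlinarith)
        positivity
    _ ≤ 1 / a := by gcongr; linarith [Real.exp_pos (-a * t)]

end ModalResponse

lemma mulVec_intervalIntegral_apply {m k : Type*} [Fintype k] [DecidableEq k]
    (M : Matrix m k ℝ) {f : ℝ → k → ℝ} {a b : ℝ} (hf : IntervalIntegrable f volume a b) (i : m) :
    (M *ᵥ ∫ s in a..b, f s) i = ∫ s in a..b, (M *ᵥ f s) i :=
  (((LinearMap.proj i).comp (Matrix.toLin' M)).toContinuousLinearMap.intervalIntegral_comp_comm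
    hf).symm

lemma csSup_eq_of_tendsto {α β : Type*} [ConditionallyCompleteLinearOrder α] [TopologicalSpace α]
    [OrderTopology α] {S : Set α} {M : α} {f : β → α} {l : Filter β} [l.NeBot]
    (hS : ∀ r ∈ S, r ≤ M) (hf : ∀ᶠ b in l, f b ∈ S) (hlim : Tendsto f l (𝓝 M)) : sSup S = M :=
  (isLUB_of_mem_closure hS (mem_closure_of_tendsto hlim hf)).csSup_eq
    (hf.exists.elim fun b hb => ⟨f b, hb⟩)

def zeroStateResponse {n : ℕ} (A : Matrix (Fin n) (Fin n) ℝ) (B : Fin n → ℝ) (u : ℝ → ℝ)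
    (t : ℝ) : Fin n → ℝ :=
  ∫ s in (0 : ℝ)..t, u s • mexp A (t - s) *ᵥ B

lemma eNorm_inv_mulVec {n : ℕ} {P : Matrix (Fin n) (Fin n) ℝ} {q : Fin n → ℝ}
    (hq : ∀ i, q i ≠ 0) (hPP : P * Pᵀ = diagonal q) (w : Fin n → ℝ) :
    eNorm (P⁻¹ *ᵥ w) = √(∑ i, w i ^ 2 / q i) := by
  have hgram : P⁻¹ᵀ * P⁻¹ = diagonal fun i => (q i)⁻¹ := by
    rw [transpose_nonsing_inv, ← Matrix.mul_inv_rev, hPP]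
    refine inv_eq_left_inv ?_
    rw [diagonal_mul_diagonal, ← diagonal_one]
    exact congrArg diagonal (funext fun i => inv_mul_cancel₀ (hq i))
  have hsq : ∑ i, (P⁻¹ *ᵥ w) i ^ 2 = w ⬝ᵥ ((P⁻¹ᵀ * P⁻¹) *ᵥ w) := by
    rw [← mulVec_mulVec, dotProduct_mulVec, vecMul_transpose]
    simp only [dotProduct, sq]
  rw [eNorm, hsq, hgram]
  simp only [dotProduct, mulVec_diagonal]
  exact congrArg Real.sqrt (Finset.sum_congr rfl fun i _ => by ring)

section System

variable {n : ℕ} {A P : Matrix (Fin n) (Fin n) ℝ} {l q : Fin n → ℝ}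

lemma zeroStateResponse_eq (hP : IsUnit P.det) (hPA : P * A * P⁻¹ = -diagonal l)
    (B : Fin n → ℝ) {u : ℝ → ℝ} {t : ℝ} (hu : IntervalIntegrable u volume 0 t) :
    zeroStateResponse A B u t = P⁻¹ *ᵥ fun i => (P *ᵥ B) i * modalResponse u (l i) t := by
  rw [diagonal_neg] at hPA
  set modes : ℝ → Fin n → ℝ := fun τ i => Real.exp (-l i * τ) * (P *ᵥ B) i
  have hmexp (τ : ℝ) : mexp A τ *ᵥ B = P⁻¹ *ᵥ modes τ := by
    rw [mexp_eq_of_conj_diagonal hP hPA, ← mulVec_mulVec, ← mulVec_mulVec]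
    congr 1
    ext i
    exact mulVec_diagonal _ _ i
  have hint : IntervalIntegrable (fun s => u s • P⁻¹ *ᵥ modes (t - s)) volume 0 t :=
    hu.smul_continuousOn (Continuous.continuousOn (by fun_prop))
  rw [zeroStateResponse]
  simp_rw [hmexp]
  conv_lhs => rw [← one_mulVec (∫ s in (0 : ℝ)..t, _), ← nonsing_inv_mul P hP, ← mulVec_mulVec]
  congr 1
  ext i
  rw [mulVec_intervalIntegral_apply P hint, modalResponse, ← intervalIntegral.integral_const_mul]
  congr 1
  ext s
  rw [mulVec_smul, mulVec_mulVec, mul_nonsing_inv P hP, one_mulVec]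
  simp only [modes, Pi.smul_apply, smul_eq_mul]
  ring

lemma eNorm_zeroStateResponse (hP : IsUnit P.det) (hPA : P * A * P⁻¹ = -diagonal l)
    (hq : ∀ i, q i ≠ 0) (hPP : P * Pᵀ = diagonal q) (B : Fin n → ℝ) {u : ℝ → ℝ} {t : ℝ}
    (hu : IntervalIntegrable u volume 0 t) :
    eNorm (zeroStateResponse A B u t)
      = √(∑ i, ((P *ᵥ B) i * modalResponse u (l i) t) ^ 2 / q i) := by
  rw [zeroStateResponse_eq hP hPA B hu, eNorm_inv_mulVec hq hPP]

lemma eNorm_zeroStateResponse_le (hl : ∀ i, 0 < l i) (hq : ∀ i, 0 < q i) (hP : IsUnit P.det)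
    (hPA : P * A * P⁻¹ = -diagonal l) (hPP : P * Pᵀ = diagonal q) (B : Fin n → ℝ)
    {u : ℝ → ℝ} (hu : Measurable u) {t : ℝ} (ht : 0 ≤ t)
    (hb : ∀ᵐ s ∂volume.restrict (Set.Ioc 0 t), |u s| ≤ 1) :
    eNorm (zeroStateResponse A B u t) ≤ √(∑ i, ((P *ᵥ B) i / l i) ^ 2 / q i) := by
  have hint : IntervalIntegrable u volume 0 t := by
    refine (intervalIntegrable_const (c := (1 : ℝ))).mono_fun' hu.aestronglyMeasurable ?_
    rwa [Set.uIoc_of_le ht]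
  rw [eNorm_zeroStateResponse hP hPA (fun i => (hq i).ne') hPP B hint]
  refine Real.sqrt_le_sqrt (Finset.sum_le_sum fun i _ => ?_)
  rw [div_eq_mul_one_div ((P *ᵥ B) i), mul_pow, mul_pow]
  refine div_le_div_of_nonneg_right (mul_le_mul_of_nonneg_left ?_ (sq_nonneg _)) (hq i).le
  obtain ⟨hlower, hupper⟩ := abs_le.mp (abs_modalResponse_le hb (hl i) ht)
  exact sq_le_sq' hlower hupper

lemma tendsto_eNorm_zeroStateResponse_one (hl : ∀ i, 0 < l i) (hq : ∀ i, q i ≠ 0)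
    (hP : IsUnit P.det) (hPA : P * A * P⁻¹ = -diagonal l) (hPP : P * Pᵀ = diagonal q)
    (B : Fin n → ℝ) :
    Tendsto (fun t => eNorm (zeroStateResponse A B (fun _ => 1) t)) atTop
      (𝓝 √(∑ i, ((P *ᵥ B) i / l i) ^ 2 / q i)) := by
  simp_rw [eNorm_zeroStateResponse hP hPA hq hPP B intervalIntegrable_const, div_eq_mul_one_div
    ((P *ᵥ B) _)]
  refine (Real.continuous_sqrt.tendsto _).comp (tendsto_finsetSum _ fun i _ => ?_)
  exact (((tendsto_modalResponse_one (hl i)).const_mul _).pow 2).div_const _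

end System

/-- Section 5.2, formula (5.12): under assumption (H)
(`PAP⁻¹ = −diag(λ₁,…,λ_n)`, `PPᵀ = diag(q₁,…,q_n)` with `λ_i, q_i > 0` and `P`
invertible), `A` is Hurwitz and the minimum ISS-gain of `ẋ = Ax + Bu` satisfies
`γ = γ_as = √(BᵀPᵀ diag(1/(q₁λ₁²),…,1/(q_nλ_n²)) P B)`. -/
theorem statement_14 {n : ℕ}
    (A : Matrix (Fin n) (Fin n) ℝ) (B : Fin n → ℝ)
    (l q : Fin n → ℝ) (hl : ∀ i, 0 < l i) (hq : ∀ i, 0 < q i)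
    (P : Matrix (Fin n) (Fin n) ℝ) (hP : IsUnit P.det)
    (hPA : P * A * P⁻¹ = -Matrix.diagonal l)
    (hPP : P * P.transpose = Matrix.diagonal q)
    (x : (ℝ → ℝ) → ℝ → Fin n → ℝ)
    (hx : x = fun u t => ∫ s in (0 : ℝ)..t, u s • (mexp A (t - s)).mulVec B)
    (γ γas : ℝ)
    (hγ : γ = sSup {r | ∃ t ≥ (0 : ℝ), ∃ u : ℝ → ℝ, Measurable u ∧
      (∀ᵐ s ∂(volume.restrict (Set.Ici (0 : ℝ))), |u s| ≤ 1) ∧ r = eNorm (x u t)})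
    (hγas : γas = sSup {r | ∃ u : ℝ → ℝ, Measurable u ∧
      (∀ᵐ s ∂(volume.restrict (Set.Ici (0 : ℝ))), |u s| ≤ 1) ∧
      r = limsup (fun t => eNorm (x u t)) atTop}) :
    Hurwitz A ∧
    γ = γas ∧
    γ = Real.sqrt (dotProduct (P.mulVec B)
      ((Matrix.diagonal fun i => 1 / (q i * l i ^ 2)).mulVec (P.mulVec B))) := by
  have hx : x = zeroStateResponse A B := hx
  subst hx
  set gain := √(∑ i, ((P *ᵥ B) i / l i) ^ 2 / q i)
  have hbound (u : ℝ → ℝ) (hu : Measurable u) (hb : ∀ᵐ s ∂volume.restrict (Set.Ici 0), |u s| ≤ 1)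
      (t : ℝ) (ht : 0 ≤ t) : eNorm (zeroStateResponse A B u t) ≤ gain :=
    eNorm_zeroStateResponse_le hl hq hP hPA hPP B hu ht
      (ae_restrict_of_ae_restrict_of_subset (fun _ hs => hs.1.le) hb)
  have hlim := tendsto_eNorm_zeroStateResponse_one hl (fun i => (hq i).ne') hP hPA hPP B
  have hone : ∀ᵐ s ∂volume.restrict (Set.Ici (0 : ℝ)), |(fun _ : ℝ => (1 : ℝ)) s| ≤ 1 := by simp
  have hγ_eq : γ = gain := by
    rw [hγ]
    refine csSup_eq_of_tendsto ?_ ((eventually_ge_atTop 0).mono fun t ht =>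
      ⟨t, ht, _, measurable_const, hone, rfl⟩) hlim
    rintro r ⟨t, ht, u, hu, hb, rfl⟩
    exact hbound u hu hb t ht
  have hγas_eq : γas = gain := by
    rw [hγas]
    refine IsGreatest.csSup_eq ⟨⟨_, measurable_const, hone, hlim.limsup_eq.symm⟩, ?_⟩
    rintro r ⟨u, hu, hb, rfl⟩
    exact limsup_le_of_le (isCoboundedUnder_le_of_le atTop fun _ => Real.sqrt_nonneg _)
      ((eventually_ge_atTop 0).mono (hbound u hu hb))
  have hA : Hurwitz A :=
    hurwitz_of_conj_diagonal hP (hPA.trans (diagonal_neg l)) fun i => neg_neg_of_pos (hl i)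
  refine ⟨hA, hγ_eq.trans hγas_eq.symm, hγ_eq.trans (congrArg Real.sqrt ?_)⟩
  simp only [dotProduct, mulVec_diagonal]
  exact Finset.sum_congr rfl fun i _ => by ring
end
end
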